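/- Let μ be a probability measure on E_Δ and σ an (M^μ_t)_{t≥0}-stopping time. If Λ ∈ M^μ_σ satisfies P^h_μ(Λ; σ<ζ) = 0, then for every subset Λ' ⊂ Λ one has Λ' ∩ {σ < ζ} ∈ M^μ_σ. -/

import Mathlib

open MeasureTheory Set Filter
open scoped NNReal ENNReal

noncomputable section

variable {S : Type*} [MeasurableSpace S] {Ω : Type*}

/-- The natural filtration `F⁰_t = σ(X_s : s ∈ [0,t])` of the process `X`. -/
def F0 (X : ℝ≥0 → Ω → S) (t : ℝ≥0) : MeasurableSpace Ω :=
  ⨆ s ∈ Set.Iic t, MeasurableSpace.comap (X s) inferInstance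

/-- `F⁰_∞ = σ(X_s : s ≥ 0)`. -/
def F0inf (X : ℝ≥0 → Ω → S) : MeasurableSpace Ω :=
  ⨆ s : ℝ≥0, MeasurableSpace.comap (X s) inferInstance

/-- `F⁰_{t+} = ⋂_{s > t} F⁰_s`. -/
def F0plus (X : ℝ≥0 → Ω → S) (t : ℝ≥0) : MeasurableSpace Ω :=
  ⨅ s ∈ Set.Ioi t, F0 X s

/-- The life time `ζ(ω) = inf {t ≥ 0 : X_t(ω) = Δ}` (with value `∞` if the path
never reaches the cemetery `Δ`). -/
def lifetime (Δ : S) (X : ℝ≥0 → Ω → S) (ω : Ω) : ℝ≥0∞ :=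
  ⨅ (t : ℝ≥0) (_ : X t ω = Δ), (t : ℝ≥0∞)

variable (Δ : S)

/-- `Q̄_{x,t}[f ; t < ζ] := h(x)·E^h_x[e^{αt}·f/h(X_t) ; t < ζ]`, the σ-finite
distribution up to time `t` applied to a nonnegative integrand `f`. -/
def Qbar (α : ℝ) (h : S → ℝ≥0∞) (X : ℝ≥0 → Ω → S)
    (P : S → @Measure Ω (F0inf X)) (x : S) (t : ℝ≥0) (f : Ω → ℝ≥0∞) : ℝ≥0∞ :=
  h x * ∫⁻ ω in {ω | (t : ℝ≥0∞) < lifetime Δ X ω},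
      ENNReal.ofReal (Real.exp (α * (t : ℝ))) * f ω * (h (X t ω))⁻¹ ∂(P x)

/-- `Q̄_{x,t}(Λ ; t < ζ)` of a set `Λ`. -/
def QbarSet (α : ℝ) (h : S → ℝ≥0∞) (X : ℝ≥0 → Ω → S)
    (P : S → @Measure Ω (F0inf X)) (x : S) (t : ℝ≥0) (Λ : Set Ω) : ℝ≥0∞ :=
  Qbar Δ α h X P x t (Λ.indicator 1)

/-- `Q̄_{μ,t}(Λ ; t < ζ) = ∫ Q̄_{x,t}(Λ ; t < ζ) μ(dx)` (note `Q̄_{Δ,t} = 0`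
automatically since `h Δ = 0`). -/
def Qmu (α : ℝ) (h : S → ℝ≥0∞) (X : ℝ≥0 → Ω → S)
    (P : S → @Measure Ω (F0inf X)) (μ : Measure S) (t : ℝ≥0) (Λ : Set Ω) : ℝ≥0∞ :=
  ∫⁻ x, QbarSet Δ α h X P x t Λ ∂μ

/-- `P^h_μ(Λ) = ∫ P^h_x(Λ) μ(dx)`. -/
def Pmu (X : ℝ≥0 → Ω → S) (P : S → @Measure Ω (F0inf X)) (μ : Measure S)
    (Λ : Set Ω) : ℝ≥0∞ :=
  ∫⁻ x, P x Λ ∂μ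

/-- `P^h_μ(Λ ; t < ζ)`. -/
def PmuT (X : ℝ≥0 → Ω → S) (P : S → @Measure Ω (F0inf X)) (μ : Measure S)
    (t : ℝ≥0) (Λ : Set Ω) : ℝ≥0∞ :=
  ∫⁻ x, P x (Λ ∩ {ω | (t : ℝ≥0∞) < lifetime Δ X ω}) ∂μ

/-- The augmented σ-field `M^μ_t`. -/
def Mmu (α : ℝ) (h : S → ℝ≥0∞) (X : ℝ≥0 → Ω → S)
    (P : S → @Measure Ω (F0inf X)) (μ : Measure S) (t : ℝ≥0) : Set (Set Ω) :=
  {Λ | ∃ Λ' Γ : Set Ω, MeasurableSet[F0 X t] Λ' ∧ MeasurableSet[F0plus X t] Γ ∧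
      symmDiff Λ Λ' ⊆ Γ ∧ ∀ T : ℝ≥0, t < T → Qmu Δ α h X P μ T Γ = 0}

/-- The auxiliary family `G^{μ,1}_t`. -/
def Gmu1 (α : ℝ) (h : S → ℝ≥0∞) (X : ℝ≥0 → Ω → S)
    (P : S → @Measure Ω (F0inf X)) (μ : Measure S) (t : ℝ≥0) : Set (Set Ω) :=
  {Λ | ∃ Λ' Γ : Set Ω, MeasurableSet[F0 X t] Λ' ∧ MeasurableSet[F0plus X t] Γ ∧
      symmDiff Λ Λ' ⊆ Γ ∧ PmuT Δ X P μ t Γ = 0}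

/-- The auxiliary family `G^{μ,2}_t`. -/
def Gmu2 (α : ℝ) (h : S → ℝ≥0∞) (X : ℝ≥0 → Ω → S)
    (P : S → @Measure Ω (F0inf X)) (μ : Measure S) (t : ℝ≥0) : Set (Set Ω) :=
  {Λ | ∃ Λ' Γ : Set Ω, MeasurableSet[F0plus X t] Λ' ∧ MeasurableSet[F0plus X t] Γ ∧
      symmDiff Λ Λ' ⊆ Γ ∧ PmuT Δ X P μ t Γ = 0}

/-- The `P^h_μ`-augmentation `F^{h,μ}_t` of `F⁰_t` in `F⁰_∞`. -/
def Fhmu (X : ℝ≥0 → Ω → S) (P : S → @Measure Ω (F0inf X)) (μ : Measure S)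
    (t : ℝ≥0) : Set (Set Ω) :=
  {Λ | ∃ Λ' Γ : Set Ω, MeasurableSet[F0 X t] Λ' ∧ MeasurableSet[F0inf X] Γ ∧
      symmDiff Λ Λ' ⊆ Γ ∧ Pmu X P μ Γ = 0}

/-- `M_t = ⋂_μ M^μ_t`, the intersection over all probability measures `μ` on `E_Δ`. -/
def Mt (α : ℝ) (h : S → ℝ≥0∞) (X : ℝ≥0 → Ω → S)
    (P : S → @Measure Ω (F0inf X)) (t : ℝ≥0) : Set (Set Ω) :=
  {Λ | ∀ μ : Measure S, IsProbabilityMeasure μ → Λ ∈ Mmu Δ α h X P μ t}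

/-- `M_∞ = σ(⋃_t M_t)`. -/
def Minf (α : ℝ) (h : S → ℝ≥0∞) (X : ℝ≥0 → Ω → S)
    (P : S → @Measure Ω (F0inf X)) : MeasurableSpace Ω :=
  MeasurableSpace.generateFrom {Λ | ∃ t : ℝ≥0, Λ ∈ Mt Δ α h X P t}

/-- `M^μ_∞ = σ(⋃_t M^μ_t)`. -/
def Mmuinf (α : ℝ) (h : S → ℝ≥0∞) (X : ℝ≥0 → Ω → S)
    (P : S → @Measure Ω (F0inf X)) (μ : Measure S) : MeasurableSpace Ω :=
  MeasurableSpace.generateFrom {Λ | ∃ t : ℝ≥0, Λ ∈ Mmu Δ α h X P μ t}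

/-- `M_σ` for an `(M_t)`-stopping time `σ`. -/
def Msigma (α : ℝ) (h : S → ℝ≥0∞) (X : ℝ≥0 → Ω → S)
    (P : S → @Measure Ω (F0inf X)) (σ : Ω → ℝ≥0∞) : Set (Set Ω) :=
  {Λ | MeasurableSet[Minf Δ α h X P] Λ ∧
      ∀ t : ℝ≥0, Λ ∩ {ω | σ ω ≤ (t : ℝ≥0∞)} ∈ Mt Δ α h X P t}

/-- `M^μ_σ` for an `(M^μ_t)`-stopping time `σ`. -/
def Mmusigma (α : ℝ) (h : S → ℝ≥0∞) (X : ℝ≥0 → Ω → S)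
    (P : S → @Measure Ω (F0inf X)) (μ : Measure S) (σ : Ω → ℝ≥0∞) : Set (Set Ω) :=
  {Λ | MeasurableSet[Mmuinf Δ α h X P μ] Λ ∧
      ∀ t : ℝ≥0, Λ ∩ {ω | σ ω ≤ (t : ℝ≥0∞)} ∈ Mmu Δ α h X P μ t}

/-- `F^{h,μ}_T` for an `(F^{h,μ}_t)`-stopping time `T`. -/
def FhmuStop (X : ℝ≥0 → Ω → S) (P : S → @Measure Ω (F0inf X)) (μ : Measure S)
    (T : Ω → ℝ≥0∞) : Set (Set Ω) :=
  {Λ | ∀ t : ℝ≥0, Λ ∩ {ω | T ω ≤ (t : ℝ≥0∞)} ∈ Fhmu X P μ t}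

/-- `X_σ`, with the convention `X_∞ = Δ`. -/
def Xstop (X : ℝ≥0 → Ω → S) (σ : Ω → ℝ≥0∞) (ω : Ω) : S :=
  if σ ω < ∞ then X (σ ω).toNNReal ω else Δ

/-- The shift `θ_σ` at a random time `σ`. -/
def thetaStop (θ : ℝ≥0 → Ω → Ω) (σ : Ω → ℝ≥0∞) (ω : Ω) : Ω :=
  θ (σ ω).toNNReal ω

/-- `Q̄_{x,σ}[f ; σ < ζ] := h(x)·E^h_x[e^{ασ}·f/h(X_σ) ; σ < ζ]`, the σ-finite
distribution up to a stopping time `σ` applied to a nonnegative integrand `f`. -/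
def QbarStop (α : ℝ) (h : S → ℝ≥0∞) (X : ℝ≥0 → Ω → S)
    (P : S → @Measure Ω (F0inf X)) (x : S) (σ : Ω → ℝ≥0∞) (f : Ω → ℝ≥0∞) : ℝ≥0∞ :=
  h x * ∫⁻ ω in {ω | σ ω < lifetime Δ X ω},
      ENNReal.ofReal (Real.exp (α * (σ ω).toReal)) * f ω * (h (Xstop Δ X σ ω))⁻¹ ∂(P x)

/-- `Q̄_{x,σ}(Λ ; σ < ζ)` of a set `Λ`. -/
def QbarStopSet (α : ℝ) (h : S → ℝ≥0∞) (X : ℝ≥0 → Ω → S)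
    (P : S → @Measure Ω (F0inf X)) (x : S) (σ : Ω → ℝ≥0∞) (Λ : Set Ω) : ℝ≥0∞ :=
  QbarStop Δ α h X P x σ (Λ.indicator 1)

/-- The entrance time `D_B = inf {t ≥ 0 : X_t ∈ B}`. -/
def entranceTime (B : Set S) (X : ℝ≥0 → Ω → S) (ω : Ω) : ℝ≥0∞ :=
  ⨅ (t : ℝ≥0) (_ : X t ω ∈ B), (t : ℝ≥0∞)

/-- The hitting time `σ_B = inf {t > 0 : X_t ∈ B}`. -/
def hittingTime (B : Set S) (X : ℝ≥0 → Ω → S) (ω : Ω) : ℝ≥0∞ :=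
  ⨅ (t : ℝ≥0) (_ : 0 < t ∧ X t ω ∈ B), (t : ℝ≥0∞)

/-- A set is universally measurable (`∈ B(E_Δ)*`) if it lies in the completion of
`B(E_Δ)` with respect to every probability measure. -/
def UniversallyMeasurableSet (A : Set S) : Prop :=
  ∀ ν : Measure S, IsProbabilityMeasure ν → NullMeasurableSet A ν

/-- Iterated kernel integral
`∫ κ_{t₁-t₀}(x,dx₁) ∫ κ_{t₂-t₁}(x₁,dx₂) ⋯ f(x₁,…,xₙ)`, where `t₀` is the
starting time. -/
def iterK (κ : ℝ≥0 → S → Measure S) :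
    (n : ℕ) → (Fin (n + 1) → ℝ≥0) → ℝ≥0 → S → ((Fin (n + 1) → S) → ℝ≥0∞) → ℝ≥0∞
  | 0, t, t0, x, f => ∫⁻ y, f (fun _ => y) ∂(κ (t 0 - t0) x)
  | n + 1, t, t0, x, f =>
      ∫⁻ y, iterK κ n (fun i => t i.succ) (t 0) y (fun v => f (Fin.cons y v))
        ∂(κ (t 0 - t0) x)


/-- `γ = (σ + τ∘θ_σ)_ζ`, the time `σ + τ∘θ_σ` truncated to `∞` off `{σ + τ∘θ_σ < ζ}`. -/
def gammaTime (Δ : S) (X : ℝ≥0 → Ω → S) (θ : ℝ≥0 → Ω → Ω) (σ τ : Ω → ℝ≥0∞)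
    (ω : Ω) : ℝ≥0∞ :=
  if σ ω + τ (thetaStop θ σ ω) < lifetime Δ X ω then σ ω + τ (thetaStop θ σ ω)
  else ∞

end

/-!
Fix `t`: `Λ ∩ {σ ≤ t}` differs from some `Λ₁ ∈ F⁰_t` only inside a set `Γ₁ ∈ F⁰_{t+}` that
is `Q̄_{μ,T}`-null for all `T > t`. For measurable sets, `Q̄_{μ,T}`-nullity just says that
`P_x(· ; T < ζ)` vanishes for `μ`-a.e. `x` with `h x ≠ 0`, since the density `e^{αT} / h(X_T)`
is positive. On `{T < ζ}` the set `Λ₁` lies in `Γ₁ ∪ (Λ ∩ {σ < ζ})`, a union of two such null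
sets, so `Γ₁ ∪ Λ₁` is `Q̄_{μ,T}`-null and covers every subset of `Λ ∩ {σ ≤ t}`, in particular
`Λ' ∩ {σ < ζ} ∩ {σ ≤ t}`. The `M^μ_∞`-measurability follows from writing `Λ' ∩ {σ < ζ}` as the
union of its slices `{σ ≤ n}`.
-/

section Filtration

variable {S Ω : Type*} [MeasurableSpace S] {X : ℝ≥0 → Ω → S}

theorem measurable_F0inf (u : ℝ≥0) : Measurable[F0inf X] (X u) :=
  measurable_iff_comap_le.2 (le_iSup (fun s => MeasurableSpace.comap (X s) inferInstance) u)

theorem F0_le_F0inf (t : ℝ≥0) : F0 X t ≤ F0inf X :=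
  iSup₂_le fun u _ => le_iSup (fun s => MeasurableSpace.comap (X s) inferInstance) u

theorem F0_mono : Monotone (F0 X) := fun _ _ hab =>
  iSup₂_le fun u hu => le_iSup₂_of_le (f := fun s (_ : s ∈ Iic _) =>
    MeasurableSpace.comap (X s) inferInstance) u (mem_Iic.2 ((mem_Iic.1 hu).trans hab)) le_rfl

theorem F0_le_F0plus (t : ℝ≥0) : F0 X t ≤ F0plus X t :=
  le_iInf₂ fun _ hu => F0_mono (le_of_lt hu)

theorem F0plus_le_F0inf (t : ℝ≥0) : F0plus X t ≤ F0inf X :=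
  (iInf₂_le (t + 1) (lt_add_one t)).trans (F0_le_F0inf (t + 1))

end Filtration

section Lifetime

variable {S Ω : Type*} {Δ : S} {X : ℝ≥0 → Ω → S}

theorem lifetime_le_of_eq {ω : Ω} {s : ℝ≥0} (hs : X s ω = Δ) : lifetime Δ X ω ≤ s :=
  iInf₂_le s hs

theorem le_lifetime_of_ne (hX_absorb : ∀ (ω : Ω) (s t : ℝ≥0), s ≤ t → X s ω = Δ → X t ω = Δ)
    {ω : Ω} {s : ℝ≥0} (hs : X s ω ≠ Δ) : (s : ℝ≥0∞) ≤ lifetime Δ X ω :=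
  le_iInf₂ fun _ hu => ENNReal.coe_le_coe.2 (le_of_not_gt fun hlt => hs (hX_absorb ω _ _ hlt.le hu))

theorem lt_lifetime_iff_exists_nat
    (hX_absorb : ∀ (ω : Ω) (s t : ℝ≥0), s ≤ t → X s ω = Δ → X t ω = Δ) (T : ℝ≥0) (ω : Ω) :
    (T : ℝ≥0∞) < lifetime Δ X ω ↔ ∃ n : ℕ, X (T + 1 / (n + 1)) ω ≠ Δ := by
  constructor
  · intro hT
    obtain ⟨s, hTs, hsζ⟩ := ENNReal.lt_iff_exists_nnreal_btwn.1 hT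
    have hXs : X s ω ≠ Δ := fun hXs => (lifetime_le_of_eq hXs).not_gt hsζ
    obtain ⟨n, hn⟩ := exists_nat_one_div_lt (tsub_pos_of_lt (ENNReal.coe_lt_coe.1 hTs))
    exact ⟨n, fun hX => hXs (hX_absorb ω _ s (lt_tsub_iff_left.1 hn).le hX)⟩
  · rintro ⟨n, hn⟩
    refine lt_of_lt_of_le ?_ (le_lifetime_of_ne hX_absorb hn)
    exact_mod_cast lt_add_of_pos_right T (by positivity)

theorem measurableSet_lt_lifetime [MeasurableSpace S] [MeasurableSingletonClass S]
    (hX_absorb : ∀ (ω : Ω) (s t : ℝ≥0), s ≤ t → X s ω = Δ → X t ω = Δ) (T : ℝ≥0) :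
    MeasurableSet[F0inf X] {ω | (T : ℝ≥0∞) < lifetime Δ X ω} := by
  simp_rw [lt_lifetime_iff_exists_nat hX_absorb, ofPred_exists]
  exact MeasurableSet.iUnion fun n =>
    (measurableSet_singleton Δ).compl.preimage (measurable_F0inf _)

end Lifetime

/-- `N` need not be measurable, so `∫⁻ x, P x N ∂ν = 0` does not by itself make `P x N` vanish
`ν`-a.e.; the measurability of `x ↦ P x A` is what allows the conclusion. -/
theorem ae_measure_eq_zero_of_subset_union {ι Ω : Type*} [MeasurableSpace ι] [MeasurableSpace Ω]
    {ν : Measure ι} {P : ι → Measure Ω} {A N C : Set Ω}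
    (hA : Measurable fun x => P x A) (hN : ∫⁻ x, P x N ∂ν = 0) (hC : ∀ᵐ x ∂ν, P x C = 0)
    (hsub : A ⊆ C ∪ N) : ∀ᵐ x ∂ν, P x A = 0 := by
  have hle : ∀ᵐ x ∂ν, P x A ≤ P x N := hC.mono fun x hx =>
    (measure_mono hsub).trans ((measure_union_le _ _).trans (by rw [hx, zero_add]))
  refine (lintegral_eq_zero_iff hA).1 (le_antisymm ?_ zero_le)
  exact (lintegral_mono_ae hle).trans hN.le

theorem mul_indicator_one_mul {Ω : Type*} (c : ℝ≥0∞) (B : Set Ω) (g : Ω → ℝ≥0∞) :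
    (fun ω => c * B.indicator 1 ω * g ω) = B.indicator fun ω => c * g ω := by
  ext ω
  by_cases hω : ω ∈ B <;> simp [hω]

section Qbar

variable {S Ω : Type*} [MeasurableSpace S] {Δ : S} {α : ℝ} {h : S → ℝ≥0∞}
  {X : ℝ≥0 → Ω → S} {P : S → @Measure Ω (F0inf X)} {T : ℝ≥0} {B : Set Ω}

theorem qbarSet_eq_zero_iff (h_meas : Measurable h) (h_fin : ∀ y, h y ≠ ∞)
    (hZ : MeasurableSet[F0inf X] {ω | (T : ℝ≥0∞) < lifetime Δ X ω})
    (hB : MeasurableSet[F0inf X] B) (x : S) :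
    QbarSet Δ α h X P x T B = 0 ↔ h x = 0 ∨ P x (B ∩ {ω | (T : ℝ≥0∞) < lifetime Δ X ω}) = 0 := by
  let := F0inf X
  have hg : Measurable fun ω => ENNReal.ofReal (Real.exp (α * T)) * (h (X T ω))⁻¹ :=
    measurable_const.mul (h_meas.comp (measurable_F0inf T)).inv
  rw [QbarSet, Qbar, mul_indicator_one_mul, mul_eq_zero,
    setLIntegral_eq_zero_iff hZ (hg.indicator hB), ae_iff]
  congr! 3
  ext ω
  simp [indicator_apply_eq_zero, and_comm, Real.exp_pos, h_fin]

theorem measurable_qbarSet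
    (hP_meas : ∀ Λ : Set Ω, MeasurableSet[F0inf X] Λ → Measurable fun x => P x Λ)
    (h_meas : Measurable h) (hZ : MeasurableSet[F0inf X] {ω | (T : ℝ≥0∞) < lifetime Δ X ω})
    (hB : MeasurableSet[F0inf X] B) : Measurable fun x => QbarSet Δ α h X P x T B := by
  let := F0inf X
  have hg : Measurable fun ω => ENNReal.ofReal (Real.exp (α * T)) * B.indicator 1 ω
      * (h (X T ω))⁻¹ :=
    (measurable_const.mul (measurable_one.indicator hB)).mul
      (h_meas.comp (measurable_F0inf T)).inv
  simp_rw [QbarSet, Qbar, ← lintegral_indicator hZ]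
  exact h_meas.mul ((Measure.measurable_lintegral (hg.indicator hZ)).comp
    (Measure.measurable_of_measurable_coe P hP_meas))

theorem qmu_eq_zero_iff {μ : Measure S}
    (hP_meas : ∀ Λ : Set Ω, MeasurableSet[F0inf X] Λ → Measurable fun x => P x Λ)
    (h_meas : Measurable h) (h_fin : ∀ y, h y ≠ ∞)
    (hZ : MeasurableSet[F0inf X] {ω | (T : ℝ≥0∞) < lifetime Δ X ω})
    (hB : MeasurableSet[F0inf X] B) :
    Qmu Δ α h X P μ T B = 0 ↔
      ∀ᵐ x ∂μ.restrict {x | h x ≠ 0}, P x (B ∩ {ω | (T : ℝ≥0∞) < lifetime Δ X ω}) = 0 := by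
  have hpos : MeasurableSet {x | h x ≠ 0} := (h_meas (measurableSet_singleton 0)).compl
  rw [Qmu, lintegral_eq_zero_iff (measurable_qbarSet hP_meas h_meas hZ hB), ae_restrict_iff' hpos]
  refine eventually_congr (Eventually.of_forall fun x => ?_)
  rw [Pi.zero_apply, qbarSet_eq_zero_iff h_meas h_fin hZ hB, or_iff_not_imp_left]
  rfl

end Qbar

theorem mem_Mmu_of_subset_of_null {S Ω : Type*} [MeasurableSpace S] {Δ : S} {α : ℝ}
    {h : S → ℝ≥0∞} {X : ℝ≥0 → Ω → S} {P : S → @Measure Ω (F0inf X)} {μ : Measure S} {t : ℝ≥0}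
    {A A' : Set Ω}
    (hP_meas : ∀ Λ : Set Ω, MeasurableSet[F0inf X] Λ → Measurable fun x => P x Λ)
    (h_meas : Measurable h) (h_fin : ∀ y, h y ≠ ∞)
    (hZ : ∀ T : ℝ≥0, MeasurableSet[F0inf X] {ω | (T : ℝ≥0∞) < lifetime Δ X ω})
    (hA : A ∈ Mmu Δ α h X P μ t)
    (hA_null : ∀ T : ℝ≥0, t < T → Pmu X P μ (A ∩ {ω | (T : ℝ≥0∞) < lifetime Δ X ω}) = 0)
    (hsub : A' ⊆ A) : A' ∈ Mmu Δ α h X P μ t := by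
  let := F0inf X
  obtain ⟨Λ₁, Γ₁, hΛ₁, hΓ₁, hsymm, hQ⟩ := hA
  have hA_sub : A ⊆ Γ₁ ∪ Λ₁ :=
    (le_symmDiff_sup_right A Λ₁).trans (union_subset_union_left Λ₁ hsymm)
  have hΛ₁_sub : Λ₁ ⊆ Γ₁ ∪ A :=
    (le_symmDiff_sup_left A Λ₁).trans (union_subset_union_left A hsymm)
  refine ⟨∅, Γ₁ ∪ Λ₁, @MeasurableSet.empty _ (F0 X t), hΓ₁.union (F0_le_F0plus t _ hΛ₁),
    by rw [← bot_eq_empty, symmDiff_bot]; exact hsub.trans hA_sub, fun T hT => ?_⟩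
  set Z := {ω | (T : ℝ≥0∞) < lifetime Δ X ω}
  have hΛ₁_meas : MeasurableSet[F0inf X] Λ₁ := F0_le_F0inf t _ hΛ₁
  have hΓ₁_meas : MeasurableSet[F0inf X] Γ₁ := F0plus_le_F0inf t _ hΓ₁
  have hΓ₁_null := (qmu_eq_zero_iff hP_meas h_meas h_fin (hZ T) hΓ₁_meas).1 (hQ T hT)
  have hΛ₁_null : ∀ᵐ x ∂μ.restrict {x | h x ≠ 0}, P x (Λ₁ ∩ Z) = 0 :=
    ae_measure_eq_zero_of_subset_union (hP_meas _ (hΛ₁_meas.inter (hZ T)))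
      (le_antisymm ((setLIntegral_le_lintegral _ _).trans (hA_null T hT).le) zero_le) hΓ₁_null
      (by rw [← union_inter_distrib_right]; exact inter_subset_inter_left Z hΛ₁_sub)
  rw [qmu_eq_zero_iff hP_meas h_meas h_fin (hZ T) (hΓ₁_meas.union hΛ₁_meas)]
  filter_upwards [hΓ₁_null, hΛ₁_null] with x hΓ₁x hΛ₁x
  rw [union_inter_distrib_right]
  exact measure_union_null hΓ₁x hΛ₁x

theorem measurableSet_generateFrom_of_inter_le_mem {Ω : Type*} {M : ℝ≥0 → Set (Set Ω)}
    {σ : Ω → ℝ≥0∞} {A : Set Ω} (hA : ∀ t : ℝ≥0, A ∩ {ω | σ ω ≤ t} ∈ M t)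
    (hσ : ∀ ω ∈ A, σ ω ≠ ∞) :
    MeasurableSet[MeasurableSpace.generateFrom {Λ | ∃ t : ℝ≥0, Λ ∈ M t}] A := by
  have hA_eq : A = ⋃ n : ℕ, A ∩ {ω | σ ω ≤ (n : ℝ≥0)} := by
    ext ω
    simp only [mem_iUnion, mem_inter_iff, mem_ofPred_eq, exists_and_left, iff_self_and]
    intro hω
    obtain ⟨n, hn⟩ := ENNReal.exists_nat_gt (hσ ω hω)
    exact ⟨n, by simpa using hn.le⟩
  rw [hA_eq]
  exact .iUnion fun n => MeasurableSpace.measurableSet_generateFrom ⟨n, hA n⟩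

theorem null_sets_before_lifetime_in_Mmusigma_general
    {S : Type*} [MeasurableSpace S] [TopologicalSpace S] [BorelSpace S]
    [StandardBorelSpace S] {Ω : Type*} (Δ : S)
    (X : ℝ≥0 → Ω → S) (P : S → @Measure Ω (F0inf X))
    (h : S → ℝ≥0∞) (α : ℝ)
    (h_meas : Measurable h) (h_cem : h Δ = 0)
    (h_pos : ∀ x : S, x ≠ Δ → 0 < h x ∧ h x < ∞)
    (hX_absorb : ∀ (ω : Ω) (s t : ℝ≥0), s ≤ t → X s ω = Δ → X t ω = Δ)
    (hP_meas : ∀ Λ : Set Ω, MeasurableSet[F0inf X] Λ → Measurable fun x => P x Λ)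
    :
    ∀ (μ : Measure S), IsProbabilityMeasure μ →
    ∀ σ : Ω → ℝ≥0∞, (∀ t : ℝ≥0, {ω | σ ω ≤ (t : ℝ≥0∞)} ∈ Mmu Δ α h X P μ t) →
    ∀ Λ ∈ Mmusigma Δ α h X P μ σ,
      Pmu X P μ (Λ ∩ {ω | σ ω < lifetime Δ X ω}) = 0 →
      ∀ Λ' ⊆ Λ, (Λ' ∩ {ω | σ ω < lifetime Δ X ω}) ∈ Mmusigma Δ α h X P μ σ := by
  intro μ _ σ _ Λ hΛ hΛ_null Λ' hΛ'
  have h_fin : ∀ y, h y ≠ ∞ := fun y => by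
    by_cases hy : y = Δ
    · simp [hy, h_cem]
    · exact (h_pos y hy).2.ne
  have hslice_sub : ∀ t T : ℝ≥0, t < T →
      (Λ ∩ {ω | σ ω ≤ t}) ∩ {ω | (T : ℝ≥0∞) < lifetime Δ X ω} ⊆ Λ ∩ {ω | σ ω < lifetime Δ X ω} :=
    fun t T hT ω ⟨⟨hωΛ, hσt⟩, hTζ⟩ => ⟨hωΛ, hσt.trans_lt ((ENNReal.coe_lt_coe.2 hT).trans hTζ)⟩
  have hslice : ∀ t : ℝ≥0, (Λ' ∩ {ω | σ ω < lifetime Δ X ω}) ∩ {ω | σ ω ≤ t}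
      ∈ Mmu Δ α h X P μ t := fun t =>
    mem_Mmu_of_subset_of_null hP_meas h_meas h_fin (measurableSet_lt_lifetime hX_absorb) (hΛ.2 t)
      (fun T hT => le_antisymm ((lintegral_mono fun x => measure_mono
        (hslice_sub t T hT)).trans hΛ_null.le) zero_le)
      (inter_subset_inter_left _ (inter_subset_left.trans hΛ'))
  exact ⟨measurableSet_generateFrom_of_inter_le_mem hslice
    fun ω hω => (hω.2.trans_le le_top).ne, hslice⟩

theorem null_sets_before_lifetime_in_Mmusigma
    {S : Type*} [MeasurableSpace S] [TopologicalSpace S] [BorelSpace S]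
    [StandardBorelSpace S] {Ω : Type*} (Δ : S)
    (X : ℝ≥0 → Ω → S) (θ : ℝ≥0 → Ω → Ω) (P : S → @Measure Ω (F0inf X))
    (h : S → ℝ≥0∞) (α : ℝ) (hα : 0 < α)
    (h_meas : Measurable h) (h_cem : h Δ = 0)
    (h_pos : ∀ x : S, x ≠ Δ → 0 < h x ∧ h x < ∞)
    (hX_rc : ∀ (ω : Ω) (t : ℝ≥0),
      Filter.Tendsto (fun s => X s ω) (nhdsWithin t (Set.Ioi t)) (nhds (X t ω)))
    (hX_absorb : ∀ (ω : Ω) (s t : ℝ≥0), s ≤ t → X s ω = Δ → X t ω = Δ)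
    (hshift : ∀ (s t : ℝ≥0) (ω : Ω), X t (θ s ω) = X (t + s) ω)
    (hP_prob : ∀ x : S, IsProbabilityMeasure (P x))
    (hP_meas : ∀ Λ : Set Ω, MeasurableSet[F0inf X] Λ → Measurable fun x => P x Λ)
    (hP_start : ∀ x : S, P x {ω | X 0 ω = x} = 1)
    (hMarkov : ∀ (s : ℝ≥0) (x : S) (Y : Ω → ℝ≥0∞), Measurable[F0inf X] Y →
      ∀ Λ : Set Ω, MeasurableSet[F0plus X s] Λ →
        ∫⁻ ω in Λ, Y (θ s ω) ∂(P x)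
          = ∫⁻ ω in Λ, (∫⁻ ω', Y ω' ∂(P (X s ω))) ∂(P x))
    :
    ∀ (μ : Measure S), IsProbabilityMeasure μ →
    ∀ σ : Ω → ℝ≥0∞, (∀ t : ℝ≥0, {ω | σ ω ≤ (t : ℝ≥0∞)} ∈ Mmu Δ α h X P μ t) →
    ∀ Λ ∈ Mmusigma Δ α h X P μ σ,
      Pmu X P μ (Λ ∩ {ω | σ ω < lifetime Δ X ω}) = 0 →
      ∀ Λ' ⊆ Λ, (Λ' ∩ {ω | σ ω < lifetime Δ X ω}) ∈ Mmusigma Δ α h X P μ σ :=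
  null_sets_before_lifetime_in_Mmusigma_general Δ X P h α h_meas h_cem h_pos hX_absorb hP_meas
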